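/- Let G be an isometric daisy graph of a Hamming graph H = H_{k_1,…,k_n} with respect to 0^n, where H is the smallest possible such Hamming graph. Then every △-class of G is peripheral: if the △-class F contains the edge 0^n e^j_l for some 0 < l ≤ k_j − 1, then for every l' ∈ {1,…,k_j−1}, every vertex of W_{l'}^j has a neighbor in W_0^j (i.e., U_{l'}^j = W_{l'}^j). -/

import Mathlib

/-!
In a Hamming graph a vertex `z` lies in the interval `I(r, v)` iff every coordinate of `z`
agrees with `r` or with `v`. Hence a daisy set with root `r` is closed under resetting any
coordinate of a vertex to its value in `r`. For `r = 0^n` and a vertex `x` of the daisy graph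
with `x j ≠ 0`, resetting coordinate `j` to `0` gives a neighbour of `x` in `W_0^j`.
-/

open SimpleGraph

namespace Daisy

variable {V : Type*}

/-- The interval `I_G(u,v)`: vertices lying on shortest `u,v`-paths. -/
def interval (G : SimpleGraph V) (u v : V) : Set V :=
  {x | G.dist u x + G.dist x v = G.dist u v}

/-- The vertex set of the daisy graph of `G` with respect to the root `r`, generated by `X`. -/
def daisySet (G : SimpleGraph V) (r : V) (X : Set V) : Set V :=
  ⋃ v ∈ X, interval G r v

/-- The subgraph of `G` induced by `S` is an isometric subgraph of `G`. -/
def IsIsometricSubset (G : SimpleGraph V) (S : Set V) : Prop :=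
  ∀ u v : S, (G.induce S).dist u v = G.dist u.1 v.1

/-- Some shortest `u,v`-path of `G` contains both `x` and `y`. -/
def OnShortestPath (G : SimpleGraph V) (u v x y : V) : Prop :=
  ∃ p : G.Walk u v, p.length = G.dist u v ∧ x ∈ p.support ∧ y ∈ p.support

/-- Conditions 1 and 2 of the definition of a pseudo-median `(x,y,z)` of the triple `(u,v,w)`. -/
def PseudoMedianConds (G : SimpleGraph V) (u v w x y z : V) : Prop :=
  OnShortestPath G u v x y ∧ OnShortestPath G v w y z ∧ OnShortestPath G u w x z ∧
  G.dist x y = G.dist y z ∧ G.dist y z = G.dist x z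

/-- `(x,y,z)` is a pseudo-median of the triple `(u,v,w)` in `G`:
it satisfies the path and equidistance conditions, and `d(x,y)` is minimal under them. -/
def IsPseudoMedian (G : SimpleGraph V) (u v w x y z : V) : Prop :=
  PseudoMedianConds G u v w x y z ∧
  ∀ x' y' z' : V, PseudoMedianConds G u v w x' y' z' → G.dist x y ≤ G.dist x' y'

/-- The triple `(u,v,w)` has a pseudo-median of size `s` in `G`. -/
def HasPseudoMedianOfSize (G : SimpleGraph V) (u v w : V) (s : ℕ) : Prop :=
  ∃ x y z : V, IsPseudoMedian G u v w x y z ∧ G.dist x y = s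

/-- The Hamming graph with factors `K_{k i}`: vertices are tuples, two vertices being
adjacent iff they differ in exactly one coordinate. -/
def hammingGraph {ι : Type*} (k : ι → ℕ) : SimpleGraph (∀ i, Fin (k i)) where
  Adj u v := ∃! i, u i ≠ v i
  symm := by
    constructor
    rintro u v ⟨i, hi, hu⟩
    exact ⟨i, Ne.symm hi, fun j hj => hu j (Ne.symm hj)⟩
  loopless := by
    constructor
    rintro u ⟨i, hi, -⟩
    exact hi rfl

/-- The all-zeros vertex `0^n` of a Hamming graph. -/
def hroot {ι : Type*} (k : ι → ℕ) (hk : ∀ i, 0 < k i) : ∀ i, Fin (k i) :=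
  fun i => ⟨0, hk i⟩

/-- `S` is the vertex set of a daisy graph of `G` with respect to the root `r`. -/
def IsDaisySet (G : SimpleGraph V) (r : V) (S : Set V) : Prop :=
  ∃ X : Set V, S = daisySet G r X

/-- `G` is (isomorphic to) an isometric daisy graph of `H` with respect to the root `r`. -/
def IsIsometricDaisyGraphOf {U : Type*} (G : SimpleGraph U) (H : SimpleGraph V) (r : V) : Prop :=
  ∃ S : Set V, IsDaisySet H r S ∧ IsIsometricSubset H S ∧ Nonempty (G ≃g H.induce S)

/-- `G` is not an isometric daisy graph (w.r.t. the all-zeros root) of any Hamming graph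
with fewer vertices than `hammingGraph k`. -/
def SmallestSuch {U : Type*} (G : SimpleGraph U) {n : ℕ} (k : Fin n → ℕ) : Prop :=
  ∀ (m : ℕ) (k' : Fin m → ℕ) (hk' : ∀ i, 0 < k' i),
    Fintype.card (∀ i, Fin (k' i)) < Fintype.card (∀ i, Fin (k i)) →
    ¬ IsIsometricDaisyGraphOf G (hammingGraph k') (hroot k' hk')

/-- The Djoković relation `~` on (ordered) edges: `(u,v) ~ (x,y)` iff both are edges,
`x ∈ W_{uv} = {z | d(u,z) < d(v,z)}` and `y ∈ W_{vu}`. -/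
def sim (G : SimpleGraph V) (p q : V × V) : Prop :=
  G.Adj p.1 p.2 ∧ G.Adj q.1 q.2 ∧
  G.dist p.1 q.1 < G.dist p.2 q.1 ∧ G.dist p.2 q.2 < G.dist p.1 q.2

/-- Brešar's relation `△` on edges: `uv △ xy` iff `uv ~ xy` or there is a clique containing
edges `e`, `f` with `xy ~ e` and `uv ~ f`. -/
def tri (G : SimpleGraph V) (p q : V × V) : Prop :=
  sim G p q ∨ ∃ (T : Set V) (e f : V × V),
    G.IsClique T ∧ e.1 ∈ T ∧ e.2 ∈ T ∧ f.1 ∈ T ∧ f.2 ∈ T ∧ sim G q e ∧ sim G p f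

/-- The `△`-class of the edge `p`: the class of `p` under the equivalence relation
generated by `△` (in partial Hamming graphs `△` is itself an equivalence relation). -/
def triClass (G : SimpleGraph V) (p : V × V) : Set (V × V) :=
  {q | Relation.EqvGen (tri G) p q}

section HammingGraph

variable {ι : Type*} {k : ι → ℕ}

lemma hammingGraph_adj_update [DecidableEq ι] {x : ∀ i, Fin (k i)} {j : ι} {a : Fin (k j)}
    (h : x j ≠ a) : (hammingGraph k).Adj x (Function.update x j a) := by
  refine ⟨j, by simpa using h, fun i hi => ?_⟩
  by_contra hij
  exact hi (Function.update_of_ne hij a x).symm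

variable [Fintype ι]

lemma hammingDist_eq_one_of_adj {u v : ∀ i, Fin (k i)} (h : (hammingGraph k).Adj u v) :
    hammingDist u v = 1 := by
  obtain ⟨i, hi, huniq⟩ := h
  rw [hammingDist, Finset.card_eq_one]
  exact ⟨i, Finset.ext fun j => by simpa using ⟨fun hj => huniq j hj, fun hj => hj ▸ hi⟩⟩

lemma hammingDist_le_length {u v : ∀ i, Fin (k i)} (p : (hammingGraph k).Walk u v) :
    hammingDist u v ≤ p.length := by
  induction p with
  | nil => simp
  | @cons a b c h p ih =>
    have := hammingDist_triangle a b c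
    rw [hammingDist_eq_one_of_adj h] at this
    rw [SimpleGraph.Walk.length_cons]
    omega

lemma hammingDist_update_add_one [DecidableEq ι] {u v : ∀ i, Fin (k i)} {i : ι}
    (hi : u i ≠ v i) : hammingDist (Function.update u i (v i)) v + 1 = hammingDist u v := by
  have hfilter : Finset.univ.filter (fun j => Function.update u i (v i) j ≠ v j) =
      (Finset.univ.filter fun j => u j ≠ v j).erase i := by
    ext j
    rcases eq_or_ne j i with rfl | hji <;> simp [*]
  rw [hammingDist, hammingDist, hfilter, Finset.card_erase_add_one (by simpa using hi)]

lemma exists_walk_length_eq_hammingDist (u v : ∀ i, Fin (k i)) :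
    ∃ p : (hammingGraph k).Walk u v, p.length = hammingDist u v := by
  classical
  induction hd : hammingDist u v generalizing u with
  | zero =>
    obtain rfl := hammingDist_eq_zero.mp hd
    exact ⟨.nil, rfl⟩
  | succ d ih =>
    have hne : u ≠ v := hammingDist_ne_zero.mp (by omega)
    obtain ⟨i, hi⟩ := Function.ne_iff.mp hne
    obtain ⟨p, hp⟩ := ih (Function.update u i (v i))
      (by have := hammingDist_update_add_one hi; omega)
    exact ⟨.cons (hammingGraph_adj_update hi) p, by simp [hp]⟩

lemma hammingGraph_dist (u v : ∀ i, Fin (k i)) :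
    (hammingGraph k).dist u v = hammingDist u v := by
  obtain ⟨p, hp⟩ := exists_walk_length_eq_hammingDist u v
  obtain ⟨q, hq⟩ := SimpleGraph.Reachable.exists_walk_length_eq_dist ⟨p⟩
  exact le_antisymm (hp ▸ SimpleGraph.dist_le p) (hq ▸ hammingDist_le_length q)

lemma ite_ne_add_ite_ne_eq_iff {α : Type*} [DecidableEq α] (a b c : α) :
    ((if a ≠ b then 1 else 0) + (if b ≠ c then 1 else 0) = (if a ≠ c then 1 else 0 : ℕ)) ↔
      b = a ∨ b = c := by
  by_cases hab : a = b <;> by_cases hbc : b = c <;> by_cases hac : a = c <;> simp_all [eq_comm]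

lemma mem_interval_hammingGraph_iff (u v z : ∀ i, Fin (k i)) :
    z ∈ interval (hammingGraph k) u v ↔ ∀ i, z i = u i ∨ z i = v i := by
  classical
  simp only [interval, Set.mem_ofPred_eq, hammingGraph_dist, hammingDist, Finset.card_filter,
    ← Finset.sum_add_distrib]
  -- termwise `[u i ≠ v i] ≤ [u i ≠ z i] + [z i ≠ v i]`, so the sums agree iff all terms do
  rw [eq_comm, Finset.sum_eq_sum_iff_of_le fun i _ => by split_ifs <;> simp_all]
  simp only [Finset.mem_univ, true_implies]
  exact forall_congr' fun i => eq_comm.trans (ite_ne_add_ite_ne_eq_iff _ _ _)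

lemma update_mem_interval_hammingGraph [DecidableEq ι] {r v z : ∀ i, Fin (k i)}
    (hz : z ∈ interval (hammingGraph k) r v) (j : ι) :
    Function.update z j (r j) ∈ interval (hammingGraph k) r v := by
  rw [mem_interval_hammingGraph_iff] at hz ⊢
  intro i
  rcases eq_or_ne i j with rfl | hij
  · simp
  · simpa [hij] using hz i

lemma update_mem_daisySet_hammingGraph [DecidableEq ι] {r z : ∀ i, Fin (k i)}
    {X : Set (∀ i, Fin (k i))} (hz : z ∈ daisySet (hammingGraph k) r X) (j : ι) :
    Function.update z j (r j) ∈ daisySet (hammingGraph k) r X := by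
  simp only [daisySet, Set.mem_iUnion₂] at hz ⊢
  obtain ⟨v, hv, hzv⟩ := hz
  exact ⟨v, hv, update_mem_interval_hammingGraph hzv j⟩

end HammingGraph

theorem triClass_peripheral_general
    (n : ℕ) (k : Fin n → ℕ) (hk : ∀ i, 0 < k i)
    (S : Set (∀ i, Fin (k i)))
    (hdaisy : IsDaisySet (hammingGraph k) (hroot k hk) S)
    (j : Fin n) :
    ∀ l' : Fin (k j), l' ≠ ⟨0, hk j⟩ →
      ∀ x ∈ S, x j = l' →
        ∃ y ∈ S, y j = ⟨0, hk j⟩ ∧ (hammingGraph k).Adj x y := by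
  rintro l' hl' x hx rfl
  obtain ⟨X, rfl⟩ := hdaisy
  exact ⟨_, update_mem_daisySet_hammingGraph hx j, Function.update_self ..,
    hammingGraph_adj_update hl'⟩

/-- Let `G` (with vertex set `S`) be an isometric daisy graph of a Hamming
graph w.r.t. `0^n`, smallest possible. Every `△`-class of `G` is peripheral: if the edge
`0^n e^j_l` (for some `0 < l ≤ k j - 1`) is an edge of `G`, then for every `l' ≠ 0` every
vertex of `W_{l'}^j` has a neighbour in `W_0^j`, i.e. `U_{l'}^j = W_{l'}^j`. -/
theorem triClass_peripheral
    (n : ℕ) (k : Fin n → ℕ) (hk : ∀ i, 0 < k i)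
    (S : Set (∀ i, Fin (k i)))
    (hdaisy : IsDaisySet (hammingGraph k) (hroot k hk) S)
    (hisom : IsIsometricSubset (hammingGraph k) S)
    (hmin : SmallestSuch ((hammingGraph k).induce S) k)
    (j : Fin n) (l : Fin (k j)) (hl : l ≠ ⟨0, hk j⟩)
    (h0 : hroot k hk ∈ S) (hel : Function.update (hroot k hk) j l ∈ S) :
    ∀ l' : Fin (k j), l' ≠ ⟨0, hk j⟩ →
      ∀ x ∈ S, x j = l' →
        ∃ y ∈ S, y j = ⟨0, hk j⟩ ∧ (hammingGraph k).Adj x y :=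
  triClass_peripheral_general n k hk S hdaisy j

end Daisy
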